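/- In the SU(2)_k fusion ring, the quantum dimensions d_a = sin((a+1)π/(k+2)) / sin(π/(k+2)) satisfy the fusion-compatibility identity d_a · d_b = Σ_{c} d_c, where the sum runs over c with |a−b| ≤ c ≤ min(a+b, 2k−a−b) and c ≡ a+b (mod 2). -/

import Mathlib

open Real

/-- The quantum dimension of the sector `a` of `SU(2)_k`. -/
noncomputable def su2d (k a : ℕ) : ℝ :=
  Real.sin ((a + 1) * Real.pi / (k + 2)) / Real.sin (Real.pi / (k + 2))

/-- The fusion rule of `SU(2)_k`: `c` appears in `a ⊗ b` iff
`|a - b| ≤ c ≤ min (a+b) (2k - a - b)` and `c ≡ a + b (mod 2)`. -/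
def su2Allowed (k a b c : ℕ) : Prop :=
  a ≤ b + c ∧ b ≤ a + c ∧ c ≤ min (a + b) (2 * k - (a + b)) ∧ c % 2 = (a + b) % 2

instance : ∀ k a b c, Decidable (su2Allowed k a b c) := fun _ _ _ _ => by
  unfold su2Allowed; infer_instance

/-!
With `θ = π / (k + 2)` one has `2 sin θ sin ((c + 1) θ) = cos (c θ) - cos ((c + 2) θ)`, so the sum of
`sin ((c + 1) θ)` over the channels `c = |a - b|, |a - b| + 2, …, M` telescopes to
`cos (|a - b| θ) - cos ((M + 2) θ)`. Because `(k + 2) θ = π`, the reflection `c ↦ 2k - c` does not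
change `cos ((c + 2) θ)`, so the truncation `M = min (a + b) (2k - a - b)` is invisible and the result
is `cos ((a - b) θ) - cos ((a + b + 2) θ) = 2 sin ((a + 1) θ) sin ((b + 1) θ)`.
-/

open Finset

theorem two_mul_sin_mul_sum_sin (θ x : ℝ) (n : ℕ) :
    2 * sin θ * ∑ j ∈ range n, sin ((x + 2 * j + 1) * θ) = cos (x * θ) - cos ((x + 2 * n) * θ) := by
  induction n with
  | zero => simp
  | succ n ih =>
    have step : 2 * sin θ * sin ((x + 2 * n + 1) * θ) =
        cos ((x + 2 * n) * θ) - cos ((x + 2 * (n + 1)) * θ) := by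
      rw [mul_right_comm, two_mul_sin_mul_sin]
      ring_nf
    rw [sum_range_succ, mul_add, ih]
    push_cast
    linear_combination step

theorem cos_min_two_mul_sub_add_two {k n : ℕ} {θ : ℝ} (hθ : (k + 2) * θ = π) (hn : n ≤ 2 * k) :
    cos ((min n (2 * k - n) + 2 : ℕ) * θ) = cos ((n + 2 : ℕ) * θ) := by
  rcases le_total n (2 * k - n) with h | h
  · rw [min_eq_left h]
  · rw [min_eq_right h, ← cos_two_pi_sub, ← hθ]
    push_cast [hn]
    ring_nf

theorem sin_mul_sin_eq_sin_mul_sum {k a b n : ℕ} {θ : ℝ} (hθ : (k + 2) * θ = π)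
    (hab : a + b ≤ 2 * k) (hn : max a b - min a b + 2 * n = min (a + b) (2 * k - (a + b))) :
    sin ((a + 1) * θ) * sin ((b + 1) * θ) =
      sin θ * ∑ j ∈ range (n + 1), sin (((max a b - min a b : ℕ) + 2 * j + 1) * θ) := by
  have hm : ((max a b - min a b : ℕ) : ℝ) = |(a : ℝ) - b| := by
    rw [Nat.cast_sub (min_le_max), Nat.cast_max, Nat.cast_min, max_sub_min_eq_abs, abs_sub_comm]
  have hcos_start : cos ((max a b - min a b : ℕ) * θ) = cos ((a + 1) * θ - (b + 1) * θ) := by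
    rw [hm, ← sub_mul, add_sub_add_right_eq_sub]
    rcases abs_choice ((a : ℝ) - b) with h | h <;> rw [h]
    rw [neg_mul, cos_neg]
  have hcos_end : cos (((max a b - min a b : ℕ) + 2 * ((n + 1 : ℕ) : ℝ)) * θ) =
      cos ((a + 1) * θ + (b + 1) * θ) := by
    have hend : ((max a b - min a b : ℕ) : ℝ) + 2 * ((n + 1 : ℕ) : ℝ) =
        ((min (a + b) (2 * k - (a + b)) + 2 : ℕ) : ℝ) := by
      rw [← hn]; push_cast; ring
    rw [hend, cos_min_two_mul_sub_add_two hθ hab]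
    push_cast
    ring_nf
  have htelescope := two_mul_sin_mul_sum_sin θ (max a b - min a b : ℕ) (n + 1)
  rw [hcos_start, hcos_end, ← two_mul_sin_mul_sin] at htelescope
  linear_combination -htelescope / 2

theorem sum_filter_su2Allowed {M : Type*} [AddCommMonoid M] (f : ℕ → M) {k a b n : ℕ}
    (hn : max a b - min a b + 2 * n = min (a + b) (2 * k - (a + b))) :
    ∑ c ∈ (range (k + 1)).filter (su2Allowed k a b), f c =
      ∑ j ∈ range (n + 1), f (max a b - min a b + 2 * j) := by
  have hfilter : (range (k + 1)).filter (su2Allowed k a b) =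
      (range (n + 1)).image (fun j => max a b - min a b + 2 * j) := by
    ext c
    simp only [mem_filter, mem_range, mem_image, su2Allowed]
    constructor
    · rintro ⟨-, h⟩
      exact ⟨(c - (max a b - min a b)) / 2, by omega, by omega⟩
    · rintro ⟨j, hj, rfl⟩
      omega
  rw [hfilter, sum_image fun i _ j _ h => by omega]

theorem su2_quantum_dimension_fusion_general (k a b : ℕ)
    (ha : a ≤ k) (hb : b ≤ k) :
    su2d k a * su2d k b =
      ∑ c ∈ (Finset.range (k + 1)).filter (fun c => su2Allowed k a b c), su2d k c := by
  obtain ⟨n, hn⟩ : ∃ n, max a b - min a b + 2 * n = min (a + b) (2 * k - (a + b)) :=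
    ⟨(min (a + b) (2 * k - (a + b)) - (max a b - min a b)) / 2, by omega⟩
  have hθ : ((k : ℝ) + 2) * (π / (k + 2)) = π := mul_div_cancel₀ _ (by positivity)
  have hsin : sin (π / (k + 2)) ≠ 0 :=
    (sin_pos_of_pos_of_lt_pi (by positivity) (div_lt_self pi_pos (by linarith))).ne'
  rw [sum_filter_su2Allowed _ hn]
  simp only [su2d, mul_div_assoc, ← sum_div, Nat.cast_add, Nat.cast_mul, Nat.cast_ofNat]
  rw [div_mul_div_comm, sin_mul_sin_eq_sin_mul_sum hθ (by omega) hn]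
  field_simp

/-- In `SU(2)_k` the quantum dimensions satisfy the
fusion-compatibility identity `d_a · d_b = Σ_c d_c`, the sum running over
the fusion channels of `a ⊗ b`. -/
theorem su2_quantum_dimension_fusion (k a b : ℕ) (hk : 1 ≤ k)
    (ha : a ≤ k) (hb : b ≤ k) :
    su2d k a * su2d k b =
      ∑ c ∈ (Finset.range (k + 1)).filter (fun c => su2Allowed k a b c), su2d k c :=
  su2_quantum_dimension_fusion_general k a b ha hb
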